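/- Conditional Barber–Agakov variational lower bound: let (Ω, μ) be a probability space and let Y : Ω → S, B : Ω → T, O : Ω → U be measurable random variables taking values in finite types equipped with the discrete σ-algebra. Let q : T → U → S → ℝ satisfy q t u s ≥ 0 for all t, u, s, Σ_{s∈S} q t u s = 1 for every (t,u) ∈ T×U, and q t u s > 0 whenever P(B=t, O=u, Y=s) > 0. Then I(O ; Y | B) ≥ H(Y | B) + Σ_{(t,u,s)∈T×U×S} P(B=t, O=u, Y=s) · log (q t u s), where terms with P(B=t, O=u, Y=s) = 0 are omitted. -/

import Mathlib

open MeasureTheory ProbabilityTheory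

/-- Shannon entropy (natural log) of a random variable `X` with values in a finite type,
with the convention `0 * log 0 = 0` (since `Real.log 0 = 0`). -/
noncomputable def entropy {Ω S : Type*} [MeasurableSpace Ω] [Fintype S]
    (μ : Measure Ω) (X : Ω → S) : ℝ :=
  -∑ s : S, (μ (X ⁻¹' {s})).toReal * Real.log (μ (X ⁻¹' {s})).toReal

/-- Conditional entropy `H(Y | B) = Σ_b P(B=b) * H(Y ; μ(·|B=b))`. -/
noncomputable def condEntropy {Ω S T : Type*} [MeasurableSpace Ω] [Fintype S] [Fintype T]
    (μ : Measure Ω) (Y : Ω → S) (B : Ω → T) : ℝ :=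
  ∑ t : T, (μ (B ⁻¹' {t})).toReal * entropy (ProbabilityTheory.cond μ (B ⁻¹' {t})) Y

/-- Mutual information `I(X;Y) = H(X) + H(Y) - H(⟨X,Y⟩)`. -/
noncomputable def mutualInfo {Ω T S : Type*} [MeasurableSpace Ω] [Fintype T] [Fintype S]
    (μ : Measure Ω) (X : Ω → T) (Y : Ω → S) : ℝ :=
  entropy μ X + entropy μ Y - entropy μ (fun ω => (X ω, Y ω))

/-- Conditional mutual information `I(O;Y|B) = Σ_b P(B=b) * I(O;Y ; μ(·|B=b))`. -/
noncomputable def condMutualInfo {Ω U S T : Type*} [MeasurableSpace Ω]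
    [Fintype U] [Fintype S] [Fintype T]
    (μ : Measure Ω) (O : Ω → U) (Y : Ω → S) (B : Ω → T) : ℝ :=
  ∑ t : T, (μ (B ⁻¹' {t})).toReal * mutualInfo (ProbabilityTheory.cond μ (B ⁻¹' {t})) O Y

/-!
For each value `t` of `B`, Gibbs' inequality applied to the joint law `p(u, s)` of `(O, Y)`
and the weights `q t u s * p(u)`, which have the same total mass, gives
`∑ p(u, s) log (q t u s * p(u)) ≤ ∑ p log p`, that is
`∑ p(u, s) log q t u s ≤ H(O) - H(O, Y) = I(O; Y) - H(Y)` under `μ(· | B = t)`.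
Averaging over `t` with weights `P(B = t)` gives the theorem.
-/

open Real Finset

lemma mul_log_le_mul_log_add_sub {a x : ℝ} (ha : 0 ≤ a) (hx : 0 ≤ x) (hax : 0 < a → 0 < x) :
    a * log x ≤ a * log a + (x - a) := by
  rcases ha.eq_or_lt with rfl | ha
  · simpa using hx
  have hx := hax ha
  have h := mul_le_mul_of_nonneg_left (log_le_sub_one_of_pos (div_pos hx ha)) ha.le
  rw [log_div hx.ne' ha.ne', mul_sub_one, mul_div_cancel₀ _ ha.ne'] at h
  linarith

lemma sum_mul_log_le_sum_mul_log {ι : Type*} (s : Finset ι) {p q : ι → ℝ}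
    (hp : ∀ i ∈ s, 0 ≤ p i) (hq : ∀ i ∈ s, 0 ≤ q i) (hpq : ∀ i ∈ s, 0 < p i → 0 < q i)
    (hsum : ∑ i ∈ s, q i ≤ ∑ i ∈ s, p i) :
    ∑ i ∈ s, p i * log (q i) ≤ ∑ i ∈ s, p i * log (p i) := by
  have h := sum_le_sum fun i hi =>
    mul_log_le_mul_log_add_sub (hp i hi) (hq i hi) (hpq i hi)
  rw [sum_add_distrib, sum_sub_distrib] at h
  linarith

section Measure

variable {Ω S U : Type*} [MeasurableSpace Ω] [Fintype S] [Fintype U]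

lemma sum_toReal_measure_inter_preimage_singleton [MeasurableSpace S]
    [MeasurableSingletonClass S] (ν : Measure Ω) [IsFiniteMeasure ν] {Y : Ω → S}
    (hY : Measurable Y) (A : Set Ω) :
    ∑ s : S, (ν (A ∩ Y ⁻¹' {s})).toReal = (ν A).toReal := by
  have h s : ν (A ∩ Y ⁻¹' {s}) = ν.restrict A (Y ⁻¹' {s}) := by
    rw [Measure.restrict_apply (hY (measurableSet_singleton s)), Set.inter_comm]
  simp_rw [h, ← measureReal_def]
  rw [sum_measureReal_preimage_singleton _ fun s _ => hY (measurableSet_singleton s)]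
  simp [measureReal_def]

lemma entropy_prodMk (ν : Measure Ω) (O : Ω → U) (Y : Ω → S) :
    entropy ν (fun ω => (O ω, Y ω)) =
      -∑ x : U × S, (ν (O ⁻¹' {x.1} ∩ Y ⁻¹' {x.2})).toReal *
        log (ν (O ⁻¹' {x.1} ∩ Y ⁻¹' {x.2})).toReal := by
  have h (x : U × S) : (fun ω => (O ω, Y ω)) ⁻¹' {x} = O ⁻¹' {x.1} ∩ Y ⁻¹' {x.2} := by
    ext ω
    simp [Prod.ext_iff]
  simp only [entropy, h]

lemma entropy_eq_neg_sum_joint_mul_log [MeasurableSpace S] [MeasurableSingletonClass S]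
    (ν : Measure Ω) [IsFiniteMeasure ν] (O : Ω → U) {Y : Ω → S} (hY : Measurable Y) :
    entropy ν O =
      -∑ x : U × S, (ν (O ⁻¹' {x.1} ∩ Y ⁻¹' {x.2})).toReal * log (ν (O ⁻¹' {x.1})).toReal := by
  simp only [entropy, Fintype.sum_prod_type, ← sum_mul,
    sum_toReal_measure_inter_preimage_singleton ν hY]

theorem entropy_add_sum_mul_log_le_mutualInfo [MeasurableSpace S] [MeasurableSingletonClass S]
    (ν : Measure Ω) [IsFiniteMeasure ν] (O : Ω → U) {Y : Ω → S} (hY : Measurable Y)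
    (q : U → S → ℝ) (hq0 : ∀ u s, 0 ≤ q u s) (hq1 : ∀ u, ∑ s : S, q u s = 1)
    (hqpos : ∀ u s, 0 < (ν (O ⁻¹' {u} ∩ Y ⁻¹' {s})).toReal → 0 < q u s) :
    entropy ν Y + ∑ x : U × S, (ν (O ⁻¹' {x.1} ∩ Y ⁻¹' {x.2})).toReal * log (q x.1 x.2)
      ≤ mutualInfo ν O Y := by
  set p : U × S → ℝ := fun x => (ν (O ⁻¹' {x.1} ∩ Y ⁻¹' {x.2})).toReal
  set pO : U × S → ℝ := fun x => (ν (O ⁻¹' {x.1})).toReal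
  have hp_le (x : U × S) : p x ≤ pO x :=
    ENNReal.toReal_mono (measure_ne_top ν _) (measure_mono Set.inter_subset_left)
  have hmass : ∑ x, q x.1 x.2 * pO x = ∑ x, p x := by
    simp only [p, pO, Fintype.sum_prod_type, ← sum_mul, hq1, one_mul,
      sum_toReal_measure_inter_preimage_singleton ν hY]
  have hgibbs : ∑ x, p x * log (q x.1 x.2 * pO x) ≤ ∑ x, p x * log (p x) :=
    sum_mul_log_le_sum_mul_log _ (fun _ _ => ENNReal.toReal_nonneg)
      (fun x _ => mul_nonneg (hq0 x.1 x.2) ENNReal.toReal_nonneg)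
      (fun x _ hx => mul_pos (hqpos x.1 x.2 hx) (hx.trans_le (hp_le x))) hmass.le
  have hsplit : ∑ x, p x * log (q x.1 x.2 * pO x) =
      ∑ x, p x * log (q x.1 x.2) + ∑ x, p x * log (pO x) := by
    rw [← sum_add_distrib]
    refine sum_congr rfl fun x _ => ?_
    rcases (ENNReal.toReal_nonneg : 0 ≤ p x).eq_or_lt with hx | hx
    · rw [show p x = 0 from hx.symm]; ring
    · rw [log_mul (hqpos x.1 x.2 hx).ne' (hx.trans_le (hp_le x)).ne', mul_add]
  rw [mutualInfo, entropy_prodMk, entropy_eq_neg_sum_joint_mul_log ν O hY]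
  linarith

end Measure

lemma toReal_measure_inter_eq_mul_cond {Ω : Type*} [MeasurableSpace Ω] (μ : Measure Ω)
    [IsFiniteMeasure μ] {s : Set Ω} (hs : MeasurableSet s) (t : Set Ω) :
    (μ (s ∩ t)).toReal = (μ s).toReal * (μ[t | s]).toReal := by
  rw [← cond_mul_eq_inter hs t μ, ENNReal.toReal_mul, mul_comm]

theorem conditional_barber_agakov_lower_bound_general
    {Ω S T U : Type*} [MeasurableSpace Ω]
    [Fintype S] [MeasurableSpace S] [DiscreteMeasurableSpace S]
    [Fintype T] [MeasurableSpace T] [DiscreteMeasurableSpace T]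
    [Fintype U]
    (μ : Measure Ω) [IsProbabilityMeasure μ]
    (Y : Ω → S) (B : Ω → T) (O : Ω → U)
    (hY : Measurable Y) (hB : Measurable B)
    (q : T → U → S → ℝ)
    (hq0 : ∀ t u s, 0 ≤ q t u s)
    (hq1 : ∀ t u, ∑ s : S, q t u s = 1)
    (hqpos : ∀ t u s,
      0 < (μ (B ⁻¹' {t} ∩ O ⁻¹' {u} ∩ Y ⁻¹' {s})).toReal → 0 < q t u s) :
    condMutualInfo μ O Y B ≥
      condEntropy μ Y B +
        ∑ x : T × U × S,
          (μ (B ⁻¹' {x.1} ∩ O ⁻¹' {x.2.1} ∩ Y ⁻¹' {x.2.2})).toReal *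
            Real.log (q x.1 x.2.1 x.2.2) := by
  have hBt (t : T) : MeasurableSet (B ⁻¹' {t}) := hB (measurableSet_singleton t)
  have hdisintegrate : ∑ x : T × U × S,
      (μ (B ⁻¹' {x.1} ∩ O ⁻¹' {x.2.1} ∩ Y ⁻¹' {x.2.2})).toReal * log (q x.1 x.2.1 x.2.2) =
      ∑ t : T, (μ (B ⁻¹' {t})).toReal * ∑ y : U × S,
        (μ[O ⁻¹' {y.1} ∩ Y ⁻¹' {y.2} | B ⁻¹' {t}]).toReal * log (q t y.1 y.2) := by
    rw [Fintype.sum_prod_type]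
    simp only [mul_sum, Set.inter_assoc,
      toReal_measure_inter_eq_mul_cond μ (hBt _), mul_assoc]
  rw [ge_iff_le, hdisintegrate, condMutualInfo, condEntropy, ← sum_add_distrib]
  refine sum_le_sum fun t _ => ?_
  rw [← mul_add]
  refine mul_le_mul_of_nonneg_left ?_ ENNReal.toReal_nonneg
  refine entropy_add_sum_mul_log_le_mutualInfo _ O hY (q t) (hq0 t) (hq1 t) fun u s hpos => ?_
  refine hqpos t u s (ENNReal.toReal_pos ?_ (measure_ne_top μ _))
  rw [Set.inter_assoc]
  exact (inter_pos_of_cond_ne_zero (hBt t) (ENNReal.toReal_pos_iff.mp hpos).1.ne').ne'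

/-- conditional Barber–Agakov variational lower bound. -/
theorem conditional_barber_agakov_lower_bound
    {Ω S T U : Type*} [MeasurableSpace Ω]
    [Fintype S] [MeasurableSpace S] [DiscreteMeasurableSpace S]
    [Fintype T] [MeasurableSpace T] [DiscreteMeasurableSpace T]
    [Fintype U] [MeasurableSpace U] [DiscreteMeasurableSpace U]
    (μ : Measure Ω) [IsProbabilityMeasure μ]
    (Y : Ω → S) (B : Ω → T) (O : Ω → U)
    (hY : Measurable Y) (hB : Measurable B) (hO : Measurable O)
    (q : T → U → S → ℝ)
    (hq0 : ∀ t u s, 0 ≤ q t u s)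
    (hq1 : ∀ t u, ∑ s : S, q t u s = 1)
    (hqpos : ∀ t u s,
      0 < (μ (B ⁻¹' {t} ∩ O ⁻¹' {u} ∩ Y ⁻¹' {s})).toReal → 0 < q t u s) :
    condMutualInfo μ O Y B ≥
      condEntropy μ Y B +
        ∑ x : T × U × S,
          (μ (B ⁻¹' {x.1} ∩ O ⁻¹' {x.2.1} ∩ Y ⁻¹' {x.2.2})).toReal *
            Real.log (q x.1 x.2.1 x.2.2) :=
  conditional_barber_agakov_lower_bound_general μ Y B O hY hB q hq0 hq1 hqpos
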